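/- arXiv:1308.3821 — 2 statements merged into one kernel-verified Lean document; each statement's English description precedes it below -/
import Mathlib

section
/- For non-negative integers m, β with (m,β) ≠ (0,0), the coefficient of z^m in 1/((z;q)_β) equals the sum over b from 0 to β-1 of q^{bm} / ((q^{-b};q)_b · (q;q)_{β-1-b}). -/
open Finset

noncomputable section

/-- The base field `ℚ(q)`. -/
abbrev K : Type := RatFunc ℚ

/-- The indeterminate `q`. -/
noncomputable def q : K := RatFunc.X

/-- The q-Pochhammer symbol `(x;q)_n = ∏_{i=0}^{n-1} (1 - q^i x)` in `K`. -/
noncomputable def poch (x : K) (n : ℕ) : K := ∏ i ∈ Finset.range n, (1 - q ^ i * x)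

/-- The q-Pochhammer symbol `(z;q)_β` as a power series in `z`. -/
noncomputable def pochSeries (β : ℕ) : PowerSeries K :=
  ∏ i ∈ Finset.range β, (1 - PowerSeries.C (q ^ i) * PowerSeries.X)

/-! Lagrange interpolation at the nodes `q⁻ᵇ`, `b < β`, gives the partial fraction decomposition
`1 / (z;q)_β = ∑_b c_b / (1 - qᵇ z)` with `c_b⁻¹ = ∏_{i ≠ b} (1 - q^(i-b))`. Expanding each term
as a geometric series gives `coeff m = ∑_b q^(bm) c_b`, and `∏_{i ≠ b} (1 - q^(i-b))` splits at
`i = b` into `(q⁻ᵇ;q)_b (q;q)_{β-1-b}`. -/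

namespace Finset

theorem prod_range_erase {M : Type*} [CommMonoid M] (f : ℕ → M) {b n : ℕ} (hb : b < n) :
    ∏ j ∈ (range n).erase b, f j =
      (∏ j ∈ range b, f j) * ∏ j ∈ range (n - 1 - b), f (b + 1 + j) := by
  have hsplit : (range n).erase b = range b ∪ Ico (b + 1) n := by
    ext i
    simp only [mem_erase, mem_range, mem_union, mem_Ico]
    omega
  have hdisj : Disjoint (range b) (Ico (b + 1) n) :=
    disjoint_left.mpr fun i hi hi' ↦ by simp only [mem_range, mem_Ico] at hi hi'; omega
  rw [hsplit, prod_union hdisj, prod_Ico_eq_prod_range, show n - (b + 1) = n - 1 - b by omega]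

end Finset

namespace Lagrange

open Polynomial

variable {F ι : Type*} [Field F] [DecidableEq ι]

theorem basisDivisor_inv_inv {x y : F} (hy : y ≠ 0) :
    basisDivisor x⁻¹ y⁻¹ = C (1 - y * x⁻¹)⁻¹ * (1 - C y * X) := by
  have hfactor : (1 : F[X]) - C y * X = C (-y) * (X - C y⁻¹) := by
    rw [mul_sub, ← C_mul, neg_mul, mul_inv_cancel₀ hy, C_neg, C_neg, C_1]
    ring
  have hscalar : (1 - y * x⁻¹)⁻¹ * -y = (x⁻¹ - y⁻¹)⁻¹ := by
    rw [show 1 - y * x⁻¹ = -y * (x⁻¹ - y⁻¹) by field_simp; ring, mul_inv, mul_comm,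
      ← mul_assoc, mul_inv_cancel₀ (neg_ne_zero.mpr hy), one_mul]
  rw [basisDivisor, hfactor, ← mul_assoc, ← C_mul, hscalar]

variable {s : Finset ι} {a : ι → F}

theorem basis_inv_eq (ha : ∀ j ∈ s, a j ≠ 0) (b : ι) :
    Lagrange.basis s (fun i ↦ (a i)⁻¹) b =
      C (∏ j ∈ s.erase b, (1 - a j * (a b)⁻¹))⁻¹ * ∏ j ∈ s.erase b, (1 - C (a j) * X) := by
  rw [Lagrange.basis, ← Finset.prod_inv_distrib, map_prod, ← Finset.prod_mul_distrib]
  exact Finset.prod_congr rfl fun j hj ↦ basisDivisor_inv_inv (ha j (Finset.mem_of_mem_erase hj))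

theorem sum_C_inv_mul_prod_erase_one_sub_C_mul_X (hs : s.Nonempty) (hinj : Set.InjOn a s)
    (ha : ∀ j ∈ s, a j ≠ 0) :
    ∑ b ∈ s, C (∏ j ∈ s.erase b, (1 - a j * (a b)⁻¹))⁻¹ * ∏ j ∈ s.erase b, (1 - C (a j) * X)
      = 1 := by
  simp_rw [← basis_inv_eq ha]
  exact sum_basis (fun i hi j hj hij ↦ hinj hi hj (inv_injective hij)) hs

end Lagrange

namespace PowerSeries

variable {F ι : Type*} [Field F]

theorem coeff_inv_one_sub_C_mul_X (c : F) (n : ℕ) : coeff n (1 - C c * X)⁻¹ = c ^ n := by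
  have hinv : (1 - C c * X)⁻¹ = rescale c (mk 1) := by
    rw [PowerSeries.inv_eq_iff_mul_eq_one (by simp), ← rescale_X, ← map_one (rescale c),
      ← map_sub, ← map_mul, mk_one_mul_one_sub_eq_one, map_one]
  simp [hinv, coeff_rescale]

theorem coeff_inv_prod_one_sub_C_mul_X [DecidableEq ι] {s : Finset ι} {a : ι → F}
    (hs : s.Nonempty) (hinj : Set.InjOn a s) (ha : ∀ j ∈ s, a j ≠ 0) (n : ℕ) :
    coeff n (∏ i ∈ s, (1 - C (a i) * X))⁻¹ =
      ∑ b ∈ s, a b ^ n / ∏ j ∈ s.erase b, (1 - a j * (a b)⁻¹) := by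
  have hpf : (∏ i ∈ s, (1 - C (a i) * X))⁻¹ =
      ∑ b ∈ s, C (∏ j ∈ s.erase b, (1 - a j * (a b)⁻¹))⁻¹ * (1 - C (a b) * X)⁻¹ := by
    have hpoly := congrArg (Polynomial.coeToPowerSeries.ringHom (R := F))
      (Lagrange.sum_C_inv_mul_prod_erase_one_sub_C_mul_X hs hinj ha)
    simp only [map_sum, map_mul, map_prod, map_sub, map_one,
      Polynomial.coeToPowerSeries.ringHom_apply, Polynomial.coe_C, Polynomial.coe_X] at hpoly
    rw [eq_comm, eq_inv_iff_mul_eq_one (by simp [map_prod]), Finset.sum_mul]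
    refine (Finset.sum_congr rfl fun b hb ↦ ?_).trans hpoly
    rw [← Finset.mul_prod_erase s _ hb, mul_assoc, ← mul_assoc (1 - C (a b) * X)⁻¹,
      PowerSeries.inv_mul_cancel _ (by simp), one_mul]
  simp [hpf, coeff_inv_one_sub_C_mul_X, div_eq_inv_mul]

end PowerSeries

theorem q_ne_zero : q ≠ 0 := RatFunc.X_ne_zero

theorem q_pow_injective : Function.Injective (q ^ · : ℕ → K) := fun m n h ↦ by
  have hpoly : algebraMap (Polynomial ℚ) K (Polynomial.X ^ m) =
      algebraMap (Polynomial ℚ) K (Polynomial.X ^ n) := by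
    simpa [q] using h
  simpa using congrArg Polynomial.natDegree (RatFunc.algebraMap_injective ℚ hpoly)

theorem prod_range_erase_one_sub_q_pow_mul_inv {b β : ℕ} (hb : b < β) :
    ∏ j ∈ (range β).erase b, (1 - q ^ j * (q ^ b)⁻¹) = poch (q ^ b)⁻¹ b * poch q (β - 1 - b) := by
  rw [Finset.prod_range_erase _ hb, poch, poch]
  congr 1
  refine prod_congr rfl fun j _ ↦ ?_
  rw [show b + 1 + j = j + 1 + b by omega, pow_add,
    mul_inv_cancel_right₀ (pow_ne_zero b q_ne_zero), pow_succ]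

/-- for `(m,β) ≠ (0,0)`, the coefficient of `z^m` in `1/((z;q)_β)` equals
`Σ_{b=0}^{β-1} q^{bm} / ((q^{-b};q)_b (q;q)_{β-1-b})`. -/
theorem coeff_inv_pochSeries_partial_fractions (m β : ℕ) (h : (m, β) ≠ (0, 0)) :
    PowerSeries.coeff m (pochSeries β)⁻¹ =
      ∑ b ∈ Finset.range β,
        q ^ (b * m) / (poch ((q ^ b)⁻¹) b * poch q (β - 1 - b)) := by
  rcases Nat.eq_zero_or_pos β with rfl | hβ
  · have hm : m ≠ 0 := by rintro rfl; exact h rfl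
    simp [pochSeries, PowerSeries.coeff_one, hm]
  · rw [pochSeries, PowerSeries.coeff_inv_prod_one_sub_C_mul_X (nonempty_range_iff.mpr hβ.ne')
      q_pow_injective.injOn fun j _ ↦ pow_ne_zero j q_ne_zero]
    refine sum_congr rfl fun b hb ↦ ?_
    rw [prod_range_erase_one_sub_q_pow_mul_inv (mem_range.mp hb), ← pow_mul]
end
end

section
/- If μ is a partition with |μ| = |ρ| where ρ = ((k+1)^t, k^s) is an almost rectangular partition (k, s ≥ 1, t ≥ 0), then μ ≥ ρ in dominance order if and only if the length of μ is at most s + t. -/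
/-!
Put `n = s + t`, so that `|ρ| = t + n k`. If `μ ≥ ρ`, then already the first `n` parts of `μ`
sum to `|ρ| = |μ|`, so `μ` has no further parts. Conversely, let `l(μ) ≤ n` and `m ≤ n`.
If the first `m` parts of `μ` all exceed `k`, they sum to at least `m (k + 1)`, which bounds
the `m`-th partial sum of `ρ`. Otherwise all parts from the `m`-th on are at most `k`, so the
first `m` parts sum to at least `t + n k - (n - m) k = t + m k`, which again bounds it.
-/

open Finset

/-- The almost rectangular partition `ρ = ((k+1)^t, k^s)` (0-indexed parts). -/
def rho (k s t : ℕ) : ℕ → ℕ := fun i => if i < t then k + 1 else if i < t + s then k else 0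

lemma sum_range_ite_lt (m t c : ℕ) :
    ∑ j ∈ range m, (if j < t then c else 0) = min m t * c := by
  rw [← sum_filter, range_eq_Ico, Ico_filter_lt]
  simp

lemma rho_eq (k s t j : ℕ) :
    rho k s t j = (if j < t then 1 else 0) + (if j < t + s then k else 0) := by
  unfold rho
  split_ifs <;> omega

lemma sum_range_rho (k s t m : ℕ) :
    ∑ j ∈ range m, rho k s t j = min m t + min m (t + s) * k := by
  simp only [rho_eq, sum_add_distrib, sum_range_ite_lt, mul_one]

namespace Finsupp

variable {ι : Type*} [DecidableEq ι] (μ : ι →₀ ℕ)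

lemma sum_apply_le_sum (s : Finset ι) : ∑ j ∈ s, μ j ≤ μ.sum (fun _ a => a) := by
  rw [μ.sum_of_support_subset subset_union_right (fun _ a => a) fun _ _ => rfl]
  exact sum_le_sum_of_subset subset_union_left

lemma support_subset_of_sum_le {s : Finset ι} (h : μ.sum (fun _ a => a) ≤ ∑ j ∈ s, μ j) :
    μ.support ⊆ s := by
  intro j hj
  by_contra hjs
  have := μ.sum_apply_le_sum (insert j s)
  rw [sum_insert hjs] at this
  exact mem_support_iff.1 hj (by omega)

lemma support_subset_range_iff_card_le {μ : ℕ →₀ ℕ} (hμ : Antitone μ) {n : ℕ} :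
    μ.support ⊆ range n ↔ μ.support.card ≤ n := by
  refine ⟨fun h => card_range n ▸ card_le_card h, fun h j hj => ?_⟩
  have hprefix : range (j + 1) ⊆ μ.support := fun i hi =>
    mem_support_iff.2 fun hi0 =>
      mem_support_iff.1 hj (Nat.eq_zero_of_le_zero (hi0 ▸ hμ (mem_range_succ_iff.1 hi)))
  have := card_le_card hprefix
  rw [card_range] at this
  exact mem_range.2 (by omega)

end Finsupp

lemma Antitone.mul_succ_le_sum_range_or_sum_range_le {f : ℕ → ℕ} (hf : Antitone f)
    {m n : ℕ} (hmn : m ≤ n) (k : ℕ) :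
    m * (k + 1) ≤ ∑ j ∈ range m, f j ∨
      ∑ j ∈ range n, f j ≤ ∑ j ∈ range m, f j + (n - m) * k := by
  by_cases hsmall : ∃ j ∈ range m, f j ≤ k
  · right
    obtain ⟨j, hj, hjk⟩ := hsmall
    have htail : ∑ i ∈ Ico m n, f i ≤ (n - m) * k := by
      simpa using sum_le_card_nsmul (Ico m n) f k fun i hi =>
        (hf (by grind)).trans hjk
    rw [← sum_range_add_sum_Ico f hmn]
    omega
  · left
    simpa using card_nsmul_le_sum (range m) f (k + 1) fun j hj => by grind

section AlmostRectangular

variable {k s t : ℕ} {μ : ℕ →₀ ℕ}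

lemma support_subset_of_dominates_rho (hw : μ.sum (fun _ a => a) = t * (k + 1) + s * k)
    (hdom : ∀ m, ∑ j ∈ range m, rho k s t j ≤ ∑ j ∈ range m, μ j) :
    μ.support ⊆ range (t + s) := by
  apply μ.support_subset_of_sum_le
  have := hdom (t + s)
  rw [sum_range_rho, min_eq_right (Nat.le_add_right t s), min_self] at this
  linarith

lemma dominates_rho_of_support_subset (hμ : Antitone μ)
    (hw : μ.sum (fun _ a => a) = t * (k + 1) + s * k) (hsupp : μ.support ⊆ range (t + s))
    (m : ℕ) : ∑ j ∈ range m, rho k s t j ≤ ∑ j ∈ range m, μ j := by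
  have htotal {n : ℕ} (hn : t + s ≤ n) : ∑ j ∈ range n, μ j = t + (t + s) * k := by
    have hsupp_n := hsupp.trans (range_subset_range.2 hn)
    rw [← μ.sum_of_support_subset hsupp_n (fun _ a => a) fun _ _ => rfl, hw]
    ring
  rw [sum_range_rho]
  rcases le_total (t + s) m with hm | hm
  · rw [htotal hm]
    gcongr <;> exact min_le_right _ _
  · rw [min_eq_left hm]
    rcases hμ.mul_succ_le_sum_range_or_sum_range_le hm k with hhead | htail
    · linarith [min_le_left m t]
    · rw [htotal le_rfl] at htail
      have : (t + s - m) * k + m * k = (t + s) * k := by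
        rw [← add_mul, Nat.sub_add_cancel hm]
      linarith [min_le_right m t]

end AlmostRectangular

theorem dominates_almost_rectangular_iff_general (k s t : ℕ)
    (μ : ℕ →₀ ℕ) (hμ : Antitone (μ : ℕ → ℕ))
    (hw : μ.sum (fun _ m => m) = t * (k + 1) + s * k) :
    (∀ i : ℕ, ∑ j ∈ Finset.range (i + 1), rho k s t j ≤
        ∑ j ∈ Finset.range (i + 1), μ j) ↔
      μ.support.card ≤ s + t := by
  rw [add_comm s t, ← Finsupp.support_subset_range_iff_card_le hμ]
  refine ⟨fun hdom => support_subset_of_dominates_rho hw ?_,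
    fun hsupp i => dominates_rho_of_support_subset hμ hw hsupp (i + 1)⟩
  rintro (_ | i)
  · simp
  · exact hdom i

/-- a partition `μ` of the same weight as the almost rectangular
partition `ρ = ((k+1)^t, k^s)` (where `k, s ≥ 1`, `t ≥ 0`) dominates `ρ` if and
only if `μ` has at most `s + t` nonzero parts.

Here `μ` is given as a finitely supported weakly decreasing function `ℕ →₀ ℕ`
(its parts, 0-indexed), its weight is the sum of its parts, its length is the
number of nonzero parts, and `μ ≥ ρ` means every partial sum of parts of `μ`
is at least the corresponding partial sum of `ρ`. -/
theorem dominates_almost_rectangular_iff (k s t : ℕ) (hk : 1 ≤ k) (hs : 1 ≤ s)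
    (μ : ℕ →₀ ℕ) (hμ : Antitone (μ : ℕ → ℕ))
    (hw : μ.sum (fun _ m => m) = t * (k + 1) + s * k) :
    (∀ i : ℕ, ∑ j ∈ Finset.range (i + 1), rho k s t j ≤
        ∑ j ∈ Finset.range (i + 1), μ j) ↔
      μ.support.card ≤ s + t :=
  dominates_almost_rectangular_iff_general k s t μ hμ hw
end
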